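/- Let k be an algebraically closed field of characteristic zero, τ ≥ 1 an integer, and a, b, c ∈ k nonzero constants such that the polynomials X^τ − a, X^{τ+1} − b, X^{τ+2} − c ∈ k[X] are pairwise coprime (pairwise without common roots). Consider the nine polynomials in k[X, Y₃, Y₄, Y₇, Y₈]: Y₃² − (X^{τ+1}−b)(X^τ−a), Y₃Y₄ − (X^τ−a)Y₇, Y₄² − (X^τ−a)Y₈, Y₃Y₇ − (X^{τ+1}−b)Y₄, Y₄Y₇ − Y₃Y₈, Y₄Y₈ − (X^{τ+2}−c)(X^τ−a), Y₇² − (X^{τ+1}−b)Y₈, Y₇Y₈ − (X^{τ+2}−c)Y₃, Y₈² − (X^{τ+2}−c)Y₄. Then at every point p ∈ k^5 where all nine polynomials vanish, the 9×5 Jacobian matrix of these polynomials (with respect to X, Y₃, Y₄, Y₇, Y₈) evaluated at p has rank at least 4; in particular the affine curve in 𝔸^5 defined by these nine equations has no singular points. -/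
import Mathlib


open MvPolynomial

lemma rank_ge_of_det_ne_zero' {K : Type*} [Field K] {m n r : ℕ} (M : Matrix (Fin m) (Fin n) K)
    (f : Fin r → Fin m) (g : Fin r → Fin n)
    (h : (M.submatrix f g).det ≠ 0) : r ≤ M.rank := by
  have h1 : M.submatrix f g =
      ((1 : Matrix (Fin m) (Fin m) K).submatrix f id) *
        (M * (1 : Matrix (Fin n) (Fin n) K).submatrix id g) := by
    ext i j
    simp [Matrix.mul_apply, Matrix.one_apply, Finset.sum_ite_eq, Finset.sum_ite_eq']
  have h2 : (M.submatrix f g).rank = r := by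
    rw [Matrix.rank_of_isUnit _ ((Matrix.isUnit_iff_isUnit_det _).2 h.isUnit), Fintype.card_fin]
  calc r = (M.submatrix f g).rank := h2.symm
    _ ≤ (M * (1 : Matrix (Fin n) (Fin n) K).submatrix id g).rank := by
        rw [h1]; exact Matrix.rank_mul_le_right _ _
    _ ≤ M.rank := Matrix.rank_mul_le_left _ _

lemma coprime_eval_ne_zero {K : Type*} [Field K] {f g : Polynomial K}
    (h : IsCoprime f g) {x : K} (hf : Polynomial.eval x f = 0) :
    Polynomial.eval x g ≠ 0 := by
  obtain ⟨u, v, huv⟩ := h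
  intro hg
  have h2 := congrArg (Polynomial.eval x) huv
  simp [hf, hg] at h2

/-- The nine polynomials in `k[X, Y₃, Y₄, Y₇, Y₈]` (variables indexed `0,…,4` in this order)
defining the smoothed curve:  `Y₃² − (X^{τ+1}−b)(X^τ−a)`, `Y₃Y₄ − (X^τ−a)Y₇`,
`Y₄² − (X^τ−a)Y₈`, `Y₃Y₇ − (X^{τ+1}−b)Y₄`, `Y₄Y₇ − Y₃Y₈`, `Y₄Y₈ − (X^{τ+2}−c)(X^τ−a)`,
`Y₇² − (X^{τ+1}−b)Y₈`, `Y₇Y₈ − (X^{τ+2}−c)Y₃`, `Y₈² − (X^{τ+2}−c)Y₄`. -/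
noncomputable def smoothedCurveEqs (k : Type*) [CommRing k] (τ : ℕ) (a b c : k) :
    Fin 9 → MvPolynomial (Fin 5) k :=
  let X : MvPolynomial (Fin 5) k := MvPolynomial.X 0
  let Y3 : MvPolynomial (Fin 5) k := MvPolynomial.X 1
  let Y4 : MvPolynomial (Fin 5) k := MvPolynomial.X 2
  let Y7 : MvPolynomial (Fin 5) k := MvPolynomial.X 3
  let Y8 : MvPolynomial (Fin 5) k := MvPolynomial.X 4
  let Pa : MvPolynomial (Fin 5) k := X ^ τ - MvPolynomial.C a
  let Pb : MvPolynomial (Fin 5) k := X ^ (τ + 1) - MvPolynomial.C b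
  let Pc : MvPolynomial (Fin 5) k := X ^ (τ + 2) - MvPolynomial.C c
  ![Y3 ^ 2 - Pb * Pa, Y3 * Y4 - Pa * Y7, Y4 ^ 2 - Pa * Y8,
    Y3 * Y7 - Pb * Y4, Y4 * Y7 - Y3 * Y8, Y4 * Y8 - Pc * Pa,
    Y7 ^ 2 - Pb * Y8, Y7 * Y8 - Pc * Y3, Y8 ^ 2 - Pc * Y4]

set_option maxHeartbeats 4000000 in
/-- Over an algebraically closed field `k` of characteristic zero, for `τ ≥ 1`
and nonzero `a, b, c ∈ k` such that `X^τ − a`, `X^{τ+1} − b`, `X^{τ+2} − c` are pairwise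
coprime, at every common zero `p ∈ k⁵` of the nine polynomials the `9×5` Jacobian matrix has
rank at least `4`; in particular the affine curve they define is nonsingular. -/
theorem smoothed_curve_jacobian_rank
    (k : Type*) [Field k] [IsAlgClosed k] [CharZero k] (τ : ℕ) (hτ : 1 ≤ τ)
    (a b c : k) (ha : a ≠ 0) (hb : b ≠ 0) (hc : c ≠ 0)
    (hab : IsCoprime ((Polynomial.X : Polynomial k) ^ τ - Polynomial.C a)
      ((Polynomial.X : Polynomial k) ^ (τ + 1) - Polynomial.C b))
    (hac : IsCoprime ((Polynomial.X : Polynomial k) ^ τ - Polynomial.C a)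
      ((Polynomial.X : Polynomial k) ^ (τ + 2) - Polynomial.C c))
    (hbc : IsCoprime ((Polynomial.X : Polynomial k) ^ (τ + 1) - Polynomial.C b)
      ((Polynomial.X : Polynomial k) ^ (τ + 2) - Polynomial.C c)) :
    ∀ p : Fin 5 → k,
      (∀ i : Fin 9, MvPolynomial.eval p (smoothedCurveEqs k τ a b c i) = 0) →
      4 ≤ (Matrix.of fun (i : Fin 9) (j : Fin 5) =>
            MvPolynomial.eval p (MvPolynomial.pderiv j (smoothedCurveEqs k τ a b c i))).rank := by
  intro p hp
  have d0 : smoothedCurveEqs k τ a b c 0 =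
      X 1 ^ 2 - (X 0 ^ (τ+1) - C b) * (X 0 ^ τ - C a) := rfl
  have d1 : smoothedCurveEqs k τ a b c 1 = X 1 * X 2 - (X 0 ^ τ - C a) * X 3 := rfl
  have d2 : smoothedCurveEqs k τ a b c 2 = X 2 ^ 2 - (X 0 ^ τ - C a) * X 4 := rfl
  have d3 : smoothedCurveEqs k τ a b c 3 = X 1 * X 3 - (X 0 ^ (τ+1) - C b) * X 2 := rfl
  have d4 : smoothedCurveEqs k τ a b c 4 = X 2 * X 3 - X 1 * X 4 := rfl
  have d5 : smoothedCurveEqs k τ a b c 5 =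
      X 2 * X 4 - (X 0 ^ (τ+2) - C c) * (X 0 ^ τ - C a) := rfl
  have d6 : smoothedCurveEqs k τ a b c 6 = X 3 ^ 2 - (X 0 ^ (τ+1) - C b) * X 4 := rfl
  have d7 : smoothedCurveEqs k τ a b c 7 = X 3 * X 4 - (X 0 ^ (τ+2) - C c) * X 1 := rfl
  have d8 : smoothedCurveEqs k τ a b c 8 = X 4 ^ 2 - (X 0 ^ (τ+2) - C c) * X 2 := rfl
  have E1 : p 1 ^ 2 = (p 0 ^ (τ+1) - b) * (p 0 ^ τ - a) := by
    have h := hp 0; rw [d0] at h; simpa [sub_eq_zero] using h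
  have E2 : p 1 * p 2 = (p 0 ^ τ - a) * p 3 := by
    have h := hp 1; rw [d1] at h; simpa [sub_eq_zero] using h
  have E3 : p 2 ^ 2 = (p 0 ^ τ - a) * p 4 := by
    have h := hp 2; rw [d2] at h; simpa [sub_eq_zero] using h
  have E6 : p 2 * p 4 = (p 0 ^ (τ+2) - c) * (p 0 ^ τ - a) := by
    have h := hp 5; rw [d5] at h; simpa [sub_eq_zero] using h
  have E7 : p 3 ^ 2 = (p 0 ^ (τ+1) - b) * p 4 := by
    have h := hp 6; rw [d6] at h; simpa [sub_eq_zero] using h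
  have E9 : p 4 ^ 2 = (p 0 ^ (τ+2) - c) * p 2 := by
    have h := hp 8; rw [d8] at h; simpa [sub_eq_zero] using h
  have hτk : (τ : k) ≠ 0 := Nat.cast_ne_zero.2 (by omega)
  have evA : Polynomial.eval (p 0) ((Polynomial.X : Polynomial k) ^ τ - Polynomial.C a)
      = p 0 ^ τ - a := by simp
  have evB : Polynomial.eval (p 0) ((Polynomial.X : Polynomial k) ^ (τ+1) - Polynomial.C b)
      = p 0 ^ (τ+1) - b := by simp
  have evC : Polynomial.eval (p 0) ((Polynomial.X : Polynomial k) ^ (τ+2) - Polynomial.C c)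
      = p 0 ^ (τ+2) - c := by simp
  by_cases hA : p 0 ^ τ - a = 0
  · -- Case A = 0
    have hB : p 0 ^ (τ+1) - b ≠ 0 := by
      have := coprime_eval_ne_zero hab (x := p 0) (by rw [evA]; exact hA); rwa [evB] at this
    have hC : p 0 ^ (τ+2) - c ≠ 0 := by
      have := coprime_eval_ne_zero hac (x := p 0) (by rw [evA]; exact hA); rwa [evC] at this
    obtain rfl : a = p 0 ^ τ := (sub_eq_zero.mp hA).symm
    have hx : p 0 ≠ 0 := fun h => ha (by rw [h]; exact zero_pow (by omega))
    have hy3 : p 1 = 0 := by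
      have : p 1 ^ 2 = 0 := by rw [E1]; ring
      exact pow_eq_zero_iff (n := 2) (by norm_num) |>.mp this
    have hy4 : p 2 = 0 := by
      have : p 2 ^ 2 = 0 := by rw [E3]; ring
      exact pow_eq_zero_iff (n := 2) (by norm_num) |>.mp this
    have hy8 : p 4 = 0 := by
      have : p 4 ^ 2 = 0 := by rw [E9, hy4]; ring
      exact pow_eq_zero_iff (n := 2) (by norm_num) |>.mp this
    have hy7 : p 3 = 0 := by
      have : p 3 ^ 2 = 0 := by rw [E7, hy8]; ring
      exact pow_eq_zero_iff (n := 2) (by norm_num) |>.mp this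
    apply rank_ge_of_det_ne_zero' _ ![0, 7, 3, 6] ![0, 1, 2, 4]
    have hM : ((Matrix.of fun (i : Fin 9) (j : Fin 5) =>
        MvPolynomial.eval p (MvPolynomial.pderiv j
          (smoothedCurveEqs k τ (p 0 ^ τ) b c i))).submatrix ![0, 7, 3, 6] ![0, 1, 2, 4]) =
        !![-((p 0 ^ (τ+1) - b) * ((τ:k) * p 0 ^ (τ-1))), 0, 0, 0;
           0, -(p 0 ^ (τ+2) - c), 0, 0;
           0, 0, -(p 0 ^ (τ+1) - b), 0;
           0, 0, 0, -(p 0 ^ (τ+1) - b)] := by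
      ext i j
      fin_cases i <;> fin_cases j <;>
        simp [d0, d3, d6, d7, pderiv_mul, pderiv_pow, hy3, hy4, hy7, hy8,
          Matrix.vecHead, Matrix.vecTail] <;>
        ring_nf
    rw [hM]
    have hd : (!![-((p 0 ^ (τ+1) - b) * ((τ:k) * p 0 ^ (τ-1))), 0, 0, 0;
           0, -(p 0 ^ (τ+2) - c), 0, 0;
           0, 0, -(p 0 ^ (τ+1) - b), 0;
           0, 0, 0, -(p 0 ^ (τ+1) - b)]).det
        = (τ : k) * p 0 ^ (τ-1) * (p 0 ^ (τ+1) - b) ^ 3 * (p 0 ^ (τ+2) - c) := by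
      simp [Matrix.det_succ_row_zero, Fin.sum_univ_succ]
      ring
    rw [hd]
    exact mul_ne_zero (mul_ne_zero (mul_ne_zero hτk (pow_ne_zero _ hx)) (pow_ne_zero _ hB)) hC
  · by_cases hB : p 0 ^ (τ+1) - b = 0
    · -- Case B = 0
      have hC : p 0 ^ (τ+2) - c ≠ 0 := by
        have := coprime_eval_ne_zero hbc (x := p 0) (by rw [evB]; exact hB); rwa [evC] at this
      obtain rfl : b = p 0 ^ (τ+1) := (sub_eq_zero.mp hB).symm
      have hx : p 0 ≠ 0 := fun h => hb (by rw [h]; exact zero_pow (by omega))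
      have hy3 : p 1 = 0 := by
        have : p 1 ^ 2 = 0 := by rw [E1]; ring
        exact pow_eq_zero_iff (n := 2) (by norm_num) |>.mp this
      have hy7 : p 3 = 0 := by
        have : p 3 ^ 2 = 0 := by rw [E7]; ring
        exact pow_eq_zero_iff (n := 2) (by norm_num) |>.mp this
      have hy4 : p 2 ≠ 0 := by
        intro h
        apply mul_ne_zero hC hA
        rw [← E6, h]; ring
      apply rank_ge_of_det_ne_zero' _ ![0, 1, 2, 8] ![0, 1, 2, 4]
      have hM : ((Matrix.of fun (i : Fin 9) (j : Fin 5) =>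
          MvPolynomial.eval p (MvPolynomial.pderiv j
            (smoothedCurveEqs k τ a (p 0 ^ (τ+1)) c i))).submatrix
              ![0, 1, 2, 8] ![0, 1, 2, 4]) =
          !![-(((τ:k)+1) * p 0 ^ τ * (p 0 ^ τ - a)), 0, 0, 0;
             0, p 2, 0, 0;
             -((τ:k) * p 0 ^ (τ-1) * p 4), 0, 2 * p 2, -(p 0 ^ τ - a);
             -(((τ:k)+2) * p 0 ^ (τ+1) * p 2), 0, -(p 0 ^ (τ+2) - c), 2 * p 4] := by
        ext i j
        fin_cases i <;> fin_cases j <;>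
          simp [d0, d1, d2, d8, pderiv_mul, pderiv_pow, hy3, hy7,
            Matrix.vecHead, Matrix.vecTail] <;>
          ring_nf
      rw [hM]
      have hd : (!![-(((τ:k)+1) * p 0 ^ τ * (p 0 ^ τ - a)), 0, 0, 0;
             0, p 2, 0, 0;
             -((τ:k) * p 0 ^ (τ-1) * p 4), 0, 2 * p 2, -(p 0 ^ τ - a);
             -(((τ:k)+2) * p 0 ^ (τ+1) * p 2), 0, -(p 0 ^ (τ+2) - c), 2 * p 4]).det
          = -(3 * ((τ : k) + 1) * p 0 ^ τ * (p 0 ^ τ - a) ^ 2 * (p 0 ^ (τ+2) - c) * p 2) := by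
        simp [Matrix.det_succ_row_zero, Fin.sum_univ_succ]
        linear_combination ((4:k) * ((τ:k)+1) * p 0 ^ τ * (p 0 ^ τ - a) * p 2) * E6
      rw [hd]
      refine neg_ne_zero.2 (mul_ne_zero (mul_ne_zero (mul_ne_zero (mul_ne_zero
        (mul_ne_zero ?_ ?_) ?_) ?_) ?_) ?_)
      · norm_num
      · exact Nat.cast_add_one_ne_zero τ
      · exact pow_ne_zero _ hx
      · exact pow_ne_zero _ hA
      · exact hC
      · exact hy4
    · by_cases hC : p 0 ^ (τ+2) - c = 0
      · -- Case C = 0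
        obtain rfl : c = p 0 ^ (τ+2) := (sub_eq_zero.mp hC).symm
        have hx : p 0 ≠ 0 := fun h => hc (by rw [h]; exact zero_pow (by omega))
        have hy8 : p 4 = 0 := by
          have : p 4 ^ 2 = 0 := by rw [E9]; ring
          exact pow_eq_zero_iff (n := 2) (by norm_num) |>.mp this
        have hy7 : p 3 = 0 := by
          have : p 3 ^ 2 = 0 := by rw [E7, hy8]; ring
          exact pow_eq_zero_iff (n := 2) (by norm_num) |>.mp this
        have hy4 : p 2 = 0 := by
          have : p 2 ^ 2 = 0 := by rw [E3, hy8]; ring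
          exact pow_eq_zero_iff (n := 2) (by norm_num) |>.mp this
        have hy3 : p 1 ≠ 0 := by
          intro h
          apply mul_ne_zero hB hA
          rw [← E1, h]; ring
        apply rank_ge_of_det_ne_zero' _ ![7, 0, 1, 2] ![0, 1, 2, 4]
        have hM : ((Matrix.of fun (i : Fin 9) (j : Fin 5) =>
            MvPolynomial.eval p (MvPolynomial.pderiv j
              (smoothedCurveEqs k τ a b (p 0 ^ (τ+2)) i))).submatrix
                ![7, 0, 1, 2] ![0, 1, 2, 4]) =
            !![-(((τ:k)+2) * p 0 ^ (τ+1) * p 1), 0, 0, 0;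
               -(((τ:k)+1) * p 0 ^ τ * (p 0 ^ τ - a) + (p 0 ^ (τ+1) - b) * ((τ:k) * p 0 ^ (τ-1))),
                 2 * p 1, 0, 0;
               0, 0, p 1, 0;
               0, 0, 0, -(p 0 ^ τ - a)] := by
          ext i j
          fin_cases i <;> fin_cases j <;>
            simp [d0, d1, d2, d7, pderiv_mul, pderiv_pow, hy4, hy7, hy8,
              Matrix.vecHead, Matrix.vecTail] <;>
            ring_nf
        rw [hM]
        have hd : (!![-(((τ:k)+2) * p 0 ^ (τ+1) * p 1), 0, 0, 0;
               -(((τ:k)+1) * p 0 ^ τ * (p 0 ^ τ - a) + (p 0 ^ (τ+1) - b) * ((τ:k) * p 0 ^ (τ-1))),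
                 2 * p 1, 0, 0;
               0, 0, p 1, 0;
               0, 0, 0, -(p 0 ^ τ - a)]).det
            = 2 * ((τ:k)+2) * p 0 ^ (τ+1) * (p 0 ^ τ - a) * p 1 ^ 3 := by
          simp [Matrix.det_succ_row_zero, Fin.sum_univ_succ]
          ring
        rw [hd]
        refine mul_ne_zero (mul_ne_zero (mul_ne_zero (mul_ne_zero ?_ ?_)
          (pow_ne_zero _ hx)) hA) (pow_ne_zero _ hy3)
        · norm_num
        · have h2 : ((τ + 2 : ℕ) : k) ≠ 0 := Nat.cast_ne_zero.2 (by omega)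
          simpa using h2
      · -- general case
        have hy3 : p 1 ≠ 0 := by
          intro h
          apply mul_ne_zero hB hA
          rw [← E1, h]; ring
        have hy4 : p 2 ≠ 0 := by
          intro h
          apply mul_ne_zero hC hA
          rw [← E6, h]; ring
        have hy7 : p 3 ≠ 0 := by
          intro h
          apply mul_ne_zero hy3 hy4
          have h2 : (p 0 ^ τ - a) * p 3 = 0 := by rw [h]; ring
          rw [← E2] at h2; exact h2
        apply rank_ge_of_det_ne_zero' _ ![0, 2, 6, 8] ![1, 2, 3, 4]
        have hM : ((Matrix.of fun (i : Fin 9) (j : Fin 5) =>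
            MvPolynomial.eval p (MvPolynomial.pderiv j
              (smoothedCurveEqs k τ a b c i))).submatrix ![0, 2, 6, 8] ![1, 2, 3, 4]) =
            !![2 * p 1, 0, 0, 0;
               0, 2 * p 2, 0, -(p 0 ^ τ - a);
               0, 0, 2 * p 3, -(p 0 ^ (τ+1) - b);
               0, -(p 0 ^ (τ+2) - c), 0, 2 * p 4] := by
          ext i j
          fin_cases i <;> fin_cases j <;>
            simp [d0, d2, d6, d8, pderiv_mul, pderiv_pow,
              Matrix.vecHead, Matrix.vecTail] <;>
            ring_nf
        rw [hM]
        have hd : (!![2 * p 1, 0, 0, 0;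
               0, 2 * p 2, 0, -(p 0 ^ τ - a);
               0, 0, 2 * p 3, -(p 0 ^ (τ+1) - b);
               0, -(p 0 ^ (τ+2) - c), 0, 2 * p 4]).det
            = 12 * (p 0 ^ (τ+2) - c) * (p 0 ^ τ - a) * p 1 * p 3 := by
          simp [Matrix.det_succ_row_zero, Fin.sum_univ_succ]
          linear_combination ((16:k) * p 1 * p 3) * E6
        rw [hd]
        refine mul_ne_zero (mul_ne_zero (mul_ne_zero (mul_ne_zero ?_ hC) hA) hy3) hy7
        norm_num
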